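/- The belief update is the Bayes filter of the history: in a finite POMDP, the belief b_T obtained by recursively applying the belief update τ along a history (a_0, o_1, …, a_{T−1}, o_T) starting from the Dirac belief δ_{s_I} equals the conditional distribution of the hidden state s_T given the history, i.e., b_T(s) = Pr(s_T = s | a_{0:T−1}, o_{1:T}), whenever the history has positive probability. -/
import Mathlib


/-- One step of the unnormalized Bayes filter: transform the current unnormalized state
distribution by the transition kernel for action `a`, then weight by the likelihood of
observation `o`. -/
noncomputable def stepJoint {S A Ω : Type*} [Fintype S]
    (P : S → A → S → ℝ) (O : S → A → Ω → ℝ) (b : S → ℝ) (a : A) (o : Ω) : S → ℝ :=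
  fun s' => (∑ s, b s * P s a s') * O s' a o

/-- `jointFrom P O b hist s` is the joint probability of observing the history `hist`
and ending in state `s`, starting from the (sub)distribution `b`. -/
noncomputable def jointFrom {S A Ω : Type*} [Fintype S]
    (P : S → A → S → ℝ) (O : S → A → Ω → ℝ) : (S → ℝ) → List (A × Ω) → S → ℝ
  | b, [] => b
  | b, p :: rest => jointFrom P O (stepJoint P O b p.1 p.2) rest

/-- The normalized belief update `τ`. -/
noncomputable def beliefUpdate {S A Ω : Type*} [Fintype S]
    (P : S → A → S → ℝ) (O : S → A → Ω → ℝ) (b : S → ℝ) (a : A) (o : Ω) : S → ℝ :=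
  fun s' => stepJoint P O b a o s' / ∑ t, stepJoint P O b a o t

/-- Recursive application of the belief update `τ` along a history. -/
noncomputable def beliefFrom {S A Ω : Type*} [Fintype S]
    (P : S → A → S → ℝ) (O : S → A → Ω → ℝ) : (S → ℝ) → List (A × Ω) → S → ℝ
  | b, [] => b
  | b, p :: rest => beliefFrom P O (beliefUpdate P O b p.1 p.2) rest

lemma stepJoint_smul {S A Ω : Type*} [Fintype S]
    (P : S → A → S → ℝ) (O : S → A → Ω → ℝ) (c : ℝ) (b : S → ℝ) (a : A) (o : Ω) :
    stepJoint P O (fun s => c * b s) a o = fun s' => c * stepJoint P O b a o s' := by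
  funext s'
  simp only [stepJoint]
  have h : ∑ x, c * b x * P x a s' = c * ∑ x, b x * P x a s' := by
    rw [Finset.mul_sum]; exact Finset.sum_congr rfl fun x _ => by ring
  rw [h]; ring

lemma jointFrom_smul {S A Ω : Type*} [Fintype S]
    (P : S → A → S → ℝ) (O : S → A → Ω → ℝ) (hist : List (A × Ω)) :
    ∀ (c : ℝ) (b : S → ℝ),
      jointFrom P O (fun s => c * b s) hist = fun s => c * jointFrom P O b hist s := by
  induction hist with
  | nil => intro c b; rfl
  | cons p rest ih =>
    intro c b
    show jointFrom P O (stepJoint P O (fun s => c * b s) p.1 p.2) rest = _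
    rw [stepJoint_smul]
    exact ih c _

lemma stepJoint_nonneg {S A Ω : Type*} [Fintype S]
    (P : S → A → S → ℝ) (O : S → A → Ω → ℝ)
    (hP0 : ∀ s a s', 0 ≤ P s a s') (hO0 : ∀ s' a o, 0 ≤ O s' a o)
    {b : S → ℝ} (hb : ∀ s, 0 ≤ b s) (a : A) (o : Ω) (s' : S) :
    0 ≤ stepJoint P O b a o s' := by
  apply mul_nonneg _ (hO0 _ _ _)
  exact Finset.sum_nonneg fun s _ => mul_nonneg (hb s) (hP0 s a s')

lemma belief_eq_general {S A Ω : Type*} [Fintype S]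
    (P : S → A → S → ℝ) (O : S → A → Ω → ℝ)
    (hP0 : ∀ s a s', 0 ≤ P s a s') (hO0 : ∀ s' a o, 0 ≤ O s' a o)
    (hist : List (A × Ω)) :
    ∀ (b : S → ℝ), (∀ s, 0 ≤ b s) → (∑ t, b t = 1) →
      0 < ∑ s, jointFrom P O b hist s →
      ∀ s, beliefFrom P O b hist s =
        jointFrom P O b hist s / ∑ t, jointFrom P O b hist t := by
  induction hist with
  | nil =>
    intro b hb hb1 hpos s
    show b s = b s / ∑ t, b t
    rw [hb1, div_one]
  | cons p rest ih =>
    intro b hb hb1 hpos s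
    obtain ⟨a, o⟩ := p
    have hbn : ∀ s', 0 ≤ stepJoint P O b a o s' := stepJoint_nonneg P O hP0 hO0 hb a o
    have hJ : jointFrom P O b ((a,o) :: rest) = jointFrom P O (stepJoint P O b a o) rest := rfl
    set Z : ℝ := ∑ t, stepJoint P O b a o t with hZ
    have hZnn : 0 ≤ Z := Finset.sum_nonneg fun t _ => hbn t
    have hZpos : 0 < Z := by
      rcases lt_or_eq_of_le hZnn with h | h
      · exact h
      · exfalso
        have hzero : ∀ t, stepJoint P O b a o t = 0 := by
          intro t
          have := (Finset.sum_eq_zero_iff_of_nonneg (fun t _ => hbn t)).mp h.symm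
          exact this t (Finset.mem_univ t)
        have hz : stepJoint P O b a o = fun t => (0:ℝ) * (fun _ => (0:ℝ)) t := by
          funext t; simp [hzero t]
        rw [hJ, hz, jointFrom_smul] at hpos
        simp at hpos
    have hbu : beliefUpdate P O b a o
        = fun s' => Z⁻¹ * stepJoint P O b a o s' := by
      funext s'
      simp [beliefUpdate, div_eq_inv_mul, hZ]
    have hscale : jointFrom P O (beliefUpdate P O b a o) rest
        = fun t => Z⁻¹ * jointFrom P O (stepJoint P O b a o) rest t := by
      rw [hbu, jointFrom_smul]
    have hpos' : 0 < ∑ t, jointFrom P O (beliefUpdate P O b a o) rest t := by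
      rw [hscale, ← Finset.mul_sum]
      exact mul_pos (inv_pos.mpr hZpos) (by rw [hJ] at hpos; exact hpos)
    have hbu_nn : ∀ s', 0 ≤ beliefUpdate P O b a o s' := by
      intro s'
      rw [hbu]
      exact mul_nonneg (inv_nonneg.mpr hZnn) (hbn s')
    have hB : beliefFrom P O b ((a,o) :: rest) s
        = beliefFrom P O (beliefUpdate P O b a o) rest s := rfl
    have hbu1 : ∑ t, beliefUpdate P O b a o t = 1 := by
      rw [hbu, ← Finset.mul_sum, ← hZ, inv_mul_cancel₀ (ne_of_gt hZpos)]
    rw [hB, ih (beliefUpdate P O b a o) hbu_nn hbu1 hpos' s, hscale, hJ]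
    rw [← Finset.mul_sum]
    rw [mul_div_mul_left _ _ (by positivity)]

/-- The belief obtained by recursively applying the belief update along a
positive-probability history, starting from the Dirac belief at the initial state,
equals the conditional distribution of the hidden state given the history. -/
theorem belief_eq_bayes_posterior
    {S A Ω : Type*} [Fintype S] [Fintype Ω] [DecidableEq S]
    (P : S → A → S → ℝ) (O : S → A → Ω → ℝ)
    (hP0 : ∀ s a s', 0 ≤ P s a s') (hP1 : ∀ s a, ∑ s', P s a s' = 1)
    (hO0 : ∀ s' a o, 0 ≤ O s' a o) (hO1 : ∀ s' (a : A), ∑ o, O s' a o = 1)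
    (sI : S) (hist : List (A × Ω))
    (hpos : 0 < ∑ s, jointFrom P O (fun s => if s = sI then 1 else 0) hist s)
    (s : S) :
    beliefFrom P O (fun s => if s = sI then 1 else 0) hist s =
      jointFrom P O (fun s => if s = sI then 1 else 0) hist s /
        ∑ t, jointFrom P O (fun s => if s = sI then 1 else 0) hist t := by
  exact belief_eq_general P O hP0 hO0 hist _ (fun t => by positivity) (by simp) hpos s
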